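/- Assume (EA). If u_1 ∈ T satisfies 𝒫_qsym(u_1) = 0, then 𝒫_qsym(u_1 ⊗ u) = 0 for all u ∈ T. -/

import Mathlib

/-!
Each `σ_k` is the identity modulo `I_R`: on a word `a X_x X_y c` it changes `X_x X_y` into
`S(X_x X_y)`, and `X_x X_y - S(X_x X_y)` is a nonzero multiple of a generator of `I_R` (or `0`).
Hence so are `P` and its powers, and `x - 𝒫_qsym x ∈ I_R`. Conversely, comparing two choices of
decompositions shows `𝒫_qsym ∘ σ_k = 𝒫_qsym`, and `a ⊗ r_{ij} ⊗ c = w - σ_k w` for the word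
`w = a X_i X_j c`, so `𝒫_qsym` vanishes on `I_R`. Thus `ker 𝒫_qsym = I_R`, which is a right ideal.
-/

/- Setting (common to all statements):
`V` is the complex vector space with basis `X_1, …, X_N`, `T = T(V)` the tensor algebra,
realized concretely as the algebra of the free monoid of words in the letters `Fin N`;
the homogeneous component `T^n` is the span of the words of length `n`.
For `j < i` we are given nonzero scalars `b i j` and elements `p i j` in the span of the
`X_k ⊗ X_l` with `k, l ≤ i - 1`; `I_R` is the two-sided ideal generated by the elements
`X_i ⊗ X_j − b_{ij} X_j ⊗ X_i − p_{ij}`, and `𝒜 = T/I_R`. -/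

open scoped BigOperators

noncomputable section

namespace QDiff

/-- Words in the letters `X_1, …, X_N` (indexed by `Fin N`). -/
abbrev Word (N : ℕ) := FreeMonoid (Fin N)

/-- The tensor algebra `T(V)` over the `N`-dimensional space `V` with basis `X_1,…,X_N`,
realized concretely as the monoid algebra on words. -/
abbrev T (N : ℕ) := MonoidAlgebra ℂ (Word N)

variable {N : ℕ}

/-- The basis vector `X_i` of `V ⊆ T(V)`. -/
def X (i : Fin N) : T N := MonoidAlgebra.single (FreeMonoid.of i) 1

/-- The monomial of `T(V)` associated to a word. -/
def mono (w : Word N) : T N := MonoidAlgebra.single w 1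

/-- Length (tensor degree) of a word. -/
def wlen (w : Word N) : ℕ := (FreeMonoid.toList w).length

/-- `cnt w k`: the number of occurrences of the letter `X_k` in the word `w`;
so `fun k => cnt w k` is `ℓ(w)`. -/
def cnt (w : Word N) (k : Fin N) : ℕ := (FreeMonoid.toList w).count k

/-- `w' <_l w`: at the smallest index at which `ℓ(w')` and `ℓ(w)` differ,
the entry of `ℓ(w')` is strictly greater than that of `ℓ(w)`. -/
def lexLt (w' w : Word N) : Prop :=
  ∃ k : Fin N, (∀ j : Fin N, j < k → cnt w' j = cnt w j) ∧ cnt w k < cnt w' k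

/-- `w' ≤_l w`. -/
def lexLe (w' w : Word N) : Prop := (∀ k : Fin N, cnt w' k = cnt w k) ∨ lexLt w' w

/-- The homogeneous component `T^n` of the tensor algebra. -/
def Tdeg (N n : ℕ) : Submodule ℂ (T N) :=
  Submodule.span ℂ {x : T N | ∃ w : Word N, wlen w = n ∧ x = mono w}

variable (b : Fin N → Fin N → ℂ) (p : Fin N → Fin N → T N)

/-- The scalars `b i j` (for `j < i`) are nonzero. -/
def GoodB : Prop := ∀ i j : Fin N, j < i → b i j ≠ 0

/-- Each `p i j` (for `j < i`) lies in the span of the monomials `X_k ⊗ X_l`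
with `k, l ≤ i - 1`. -/
def GoodP : Prop := ∀ i j : Fin N, j < i →
  p i j ∈ Submodule.span ℂ {x : T N | ∃ k l : Fin N, k < i ∧ l < i ∧ x = X k * X l}

/-- The generator `X_i ⊗ X_j − b_{ij} X_j ⊗ X_i − p_{ij}` of the ideal of relations. -/
def relGen (i j : Fin N) : T N := X i * X j - b i j • (X j * X i) - p i j

/-- The two-sided ideal `I_R` of relations (as a `ℂ`-submodule it is the span of the
elements `a ⬝ relGen i j ⬝ c`). -/
def IR : Submodule ℂ (T N) :=
  Submodule.span ℂ
    {x : T N | ∃ (i j : Fin N) (a c : T N), j < i ∧ x = a * relGen b p i j * c}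

/-- Condition (EA): every `u ∈ I_R` lies in the span of the elements
`a ⊗ (X_i ⊗ X_j − b_{ij} X_j ⊗ X_i − p_{ij}) ⊗ c`, where `j < i` and `a, c` are monomials
of `T` such that the monomial `a ⊗ X_i ⊗ X_j ⊗ c` is `≤_l` every monomial occurring in `u`. -/
def EA : Prop :=
  ∀ u ∈ IR b p, u ∈ Submodule.span ℂ
    {x : T N | ∃ (i j : Fin N) (a c : Word N), j < i ∧
      x = mono a * relGen b p i j * mono c ∧
      ∀ w ∈ (MonoidAlgebra.coeff u : Word N →₀ ℂ).support,
        lexLe (a * (FreeMonoid.of i * FreeMonoid.of j) * c) w}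

/-- The map `S : V ⊗ V → V ⊗ V` on pairs of basis vectors. -/
def Sact (x y : Fin N) : T N :=
  if y < x then b x y • (X y * X x) + p x y
  else if x < y then (b y x)⁻¹ • (X y * X x - p y x)
  else X x * X y

/-- The map `S̄ : V ⊗ V → V ⊗ V` on pairs of basis vectors. -/
def SbarAct (x y : Fin N) : T N :=
  if y < x then b x y • (X y * X x)
  else if x < y then (b y x)⁻¹ • (X y * X x)
  else X x * X y

/-- Extend a function on words to a linear endomorphism of `T(V)`. -/
def liftWord (f : Word N → T N) : T N →ₗ[ℂ] T N :=
  (Finsupp.lsum ℂ (fun w => LinearMap.toSpanSingleton ℂ (T N) (f w))).comp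
    (MonoidAlgebra.coeffLinearEquiv ℂ).toLinearMap

/-- The action of the paper's `σ_{k+1}` (acting on the tensor factors in 0-indexed
positions `k, k+1`) on a word; identity on words that are too short. -/
def sigmaWord (k : ℕ) (w : Word N) : T N :=
  if h : k + 2 ≤ (FreeMonoid.toList w).length then
    mono (FreeMonoid.ofList ((FreeMonoid.toList w).take k)) *
      Sact b p ((FreeMonoid.toList w).get ⟨k, by omega⟩)
        ((FreeMonoid.toList w).get ⟨k + 1, by omega⟩) *
      mono (FreeMonoid.ofList ((FreeMonoid.toList w).drop (k + 2)))
  else mono w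

/-- The paper's operator `σ_{k+1}`: it acts as `S` on the tensor factors in 0-indexed
positions `k, k+1` and as the identity on all other factors. -/
def sigma (k : ℕ) : T N →ₗ[ℂ] T N := liftWord (sigmaWord b p k)

/-- The action of the paper's `σ̄_{k+1}` on a word. -/
def sigmabarWord (k : ℕ) (w : Word N) : T N :=
  if h : k + 2 ≤ (FreeMonoid.toList w).length then
    mono (FreeMonoid.ofList ((FreeMonoid.toList w).take k)) *
      SbarAct b ((FreeMonoid.toList w).get ⟨k, by omega⟩)
        ((FreeMonoid.toList w).get ⟨k + 1, by omega⟩) *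
      mono (FreeMonoid.ofList ((FreeMonoid.toList w).drop (k + 2)))
  else mono w

/-- The paper's operator `σ̄_{k+1}`: it acts as `S̄` on the tensor factors in 0-indexed
positions `k, k+1` and as the identity on all other factors. -/
def sigmabar (k : ℕ) : T N →ₗ[ℂ] T N := liftWord (sigmabarWord b k)

/-- The scalar by which `S̄` twists the (ordered) pair `(x, y)`. -/
def betaC (x y : Fin N) : ℂ := if y < x then b x y else if x < y then (b y x)⁻¹ else 1

/-- The coefficient of the quasi-permutation action of `σ ∈ S_n` on the word
`X_{f 0} ⊗ ⋯ ⊗ X_{f (n-1)}`: the product of `β` over the inversions of `σ`. -/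
def permCoeff {n : ℕ} (σ : Equiv.Perm (Fin n)) (f : Fin n → Fin N) : ℂ :=
  ∏ q ∈ Finset.univ.filter (fun q : Fin n × Fin n => q.1 < q.2 ∧ σ q.2 < σ q.1),
    betaC b (f q.1) (f q.2)

/-- The quasi-permutation action of `σ ∈ S_n` on a word
(identity on words of length `≠ n`). -/
def permWordFun {n : ℕ} (σ : Equiv.Perm (Fin n)) (w : Word N) : T N :=
  if h : (FreeMonoid.toList w).length = n then
    permCoeff b σ (fun j => (FreeMonoid.toList w).get (Fin.cast h.symm j)) •
      mono (FreeMonoid.ofList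
        (List.ofFn fun j => (FreeMonoid.toList w).get (Fin.cast h.symm (σ⁻¹ j))))
  else mono w

/-- The operator `σ̄` on `T^n` for an arbitrary permutation `σ ∈ S_n`
(the quasi-permutation representation). -/
def sigmabarPerm {n : ℕ} (σ : Equiv.Perm (Fin n)) : T N →ₗ[ℂ] T N :=
  liftWord (permWordFun b σ)

/-- The quasi-symmetrization operator `P_quasisym = (1/n!) ∑_{σ ∈ S_n} σ̄` on `T^n`. -/
def Pquasisym (n : ℕ) : T N →ₗ[ℂ] T N :=
  (n.factorial : ℂ)⁻¹ • ∑ σ : Equiv.Perm (Fin n), sigmabarPerm b σ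

/-- The adjacent transposition `s_{k+1} = (k, k+1)` (0-indexed) in `S_n`. -/
def swapAdj (n : ℕ) (k : {k : ℕ // k + 2 ≤ n}) : Equiv.Perm (Fin n) :=
  Equiv.swap ⟨k.1, by omega⟩ ⟨k.1 + 1, by omega⟩

/-- A choice, for each `σ ∈ S_n`, of a list of adjacent transpositions. -/
def DecompChoice (n : ℕ) := Equiv.Perm (Fin n) → List {k : ℕ // k + 2 ≤ n}

/-- The chosen lists really are decompositions: `σ = s_{i_1} ⋯ s_{i_r}`. -/
def ValidDecomp {n : ℕ} (D : DecompChoice n) : Prop :=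
  ∀ σ : Equiv.Perm (Fin n), ((D σ).map (swapAdj n)).prod = σ

/-- `σ̂ = σ_{i_1} ⋯ σ_{i_r}` for the chosen decomposition `σ = s_{i_1} ⋯ s_{i_r}`. -/
def Phat {n : ℕ} (D : DecompChoice n) (σ : Equiv.Perm (Fin n)) : Module.End ℂ (T N) :=
  ((D σ).map (fun k => (sigma b p k.1 : Module.End ℂ (T N)))).prod

/-- `P = (1/n!) ∑_{σ ∈ S_n} σ̂` (depending on the chosen decompositions `D`). -/
def POp {n : ℕ} (D : DecompChoice n) : Module.End ℂ (T N) :=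
  (n.factorial : ℂ)⁻¹ • ∑ σ : Equiv.Perm (Fin n), Phat b p D σ

/-- `Q` is the operator `𝒫_qsym = lim_{M → ∞} P^M`: on each `T^n` and for every choice
of decompositions, the sequence `P^M u` is eventually equal to `Q u`. -/
def IsPqsym (Q : T N →ₗ[ℂ] T N) : Prop :=
  ∀ (n : ℕ) (D : DecompChoice n), ValidDecomp D →
    ∀ u ∈ Tdeg N n, ∃ N₀ : ℕ, ∀ M ≥ N₀, ((POp b p D) ^ M) u = Q u

/-- The operator `I_r ⊗ Q^k ⊗ I_s` on `T^{r+k+s}`: on a word, apply `Q` to the middle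
`k` tensor factors and the identity to the outer factors. -/
def middleMap (Q : T N →ₗ[ℂ] T N) (r k : ℕ) : T N →ₗ[ℂ] T N :=
  liftWord (fun w =>
    mono (FreeMonoid.ofList ((FreeMonoid.toList w).take r)) *
      Q (mono (FreeMonoid.ofList (((FreeMonoid.toList w).drop r).take k))) *
      mono (FreeMonoid.ofList ((FreeMonoid.toList w).drop (r + k))))

/-- The pairing between `T(V^*)` (realized via the dual basis, hence again as the span
of words) and `T(V)`: a dual-basis word pairs to `1` with the corresponding word of the
same degree, and to `0` with all other words. -/
def pairT (w z : T N) : ℂ :=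
  Finsupp.sum (MonoidAlgebra.coeff w : Word N →₀ ℂ) (fun a c => c * (MonoidAlgebra.coeff z : Word N →₀ ℂ) a)

/-- The quotient relation defining the quadratic algebra `𝒜 = T/I_R = RingQuot (Rel b p)`. -/
inductive Rel (b : Fin N → Fin N → ℂ) (p : Fin N → Fin N → T N) : T N → T N → Prop
  | mk (i j : Fin N) (h : j < i) : Rel b p (X i * X j) (b i j • (X j * X i) + p i j)

/-- The ordered monomial `X_1^{a_1} ⊗ X_2^{a_2} ⊗ ⋯ ⊗ X_N^{a_N}`. -/
def ordMono (a : Fin N → ℕ) : T N := ((List.finRange N).map (fun i => X i ^ a i)).prod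

variable {b p}

section Monomials

lemma mono_mul (u v : Word N) : mono (u * v) = mono u * mono v := by
  simp [mono, MonoidAlgebra.single_mul_single]

lemma linearMap_ext_mono {M : Type*} [AddCommMonoid M] [Module ℂ M] {f g : T N →ₗ[ℂ] M}
    (h : ∀ w, f (mono w) = g (mono w)) : f = g :=
  MonoidAlgebra.lhom_ext' fun w => LinearMap.ext_ring (h w)

lemma liftWord_mono (f : Word N → T N) (w : Word N) : liftWord f (mono w) = f w := by
  simp [liftWord, mono]

lemma mono_mem_Tdeg (w : Word N) : mono w ∈ Tdeg N (wlen w) :=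
  Submodule.subset_span ⟨w, rfl, rfl⟩

lemma mul_mem_Tdeg {m k : ℕ} {x y : T N} (hx : x ∈ Tdeg N m) (hy : y ∈ Tdeg N k) :
    x * y ∈ Tdeg N (m + k) := by
  have h := Submodule.mul_mem_mul hx hy
  rw [Tdeg, Tdeg, Submodule.span_mul_span] at h
  refine Submodule.span_le.mpr ?_ h
  rintro _ ⟨_, ⟨u, rfl, rfl⟩, _, ⟨v, rfl, rfl⟩, rfl⟩
  exact Submodule.subset_span ⟨u * v, by simp [wlen], (mono_mul u v).symm⟩

lemma X_mul_X_mem_Tdeg (x y : Fin N) : X x * X y ∈ Tdeg N 2 := by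
  rw [X, X, ← mono, ← mono, ← mono_mul]
  exact mono_mem_Tdeg (N := N) (FreeMonoid.of x * FreeMonoid.of y)

lemma mono_append_cons_cons (A C : List (Fin N)) (x y : Fin N) :
    mono (FreeMonoid.ofList (A ++ x :: y :: C)) =
      mono (FreeMonoid.ofList A) * (X x * X y) * mono (FreeMonoid.ofList C) := by
  simp only [FreeMonoid.ofList_append, FreeMonoid.ofList_cons, mono_mul, mul_assoc]
  rfl

lemma exists_eq_ofList_append_cons_cons {k : ℕ} {w : Word N} (h : k + 2 ≤ wlen w) :
    ∃ (A : List (Fin N)) (x y : Fin N) (C : List (Fin N)),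
      A.length = k ∧ w = FreeMonoid.ofList (A ++ x :: y :: C) := by
  set l := FreeMonoid.toList w
  have hl : l.length = wlen w := rfl
  have : k + 1 < l.length := by omega
  refine ⟨l.take k, l[k], l[k + 1], l.drop (k + 2), by rw [List.length_take]; omega, ?_⟩
  rw [← List.drop_eq_getElem_cons, ← List.drop_eq_getElem_cons, List.take_append_drop]
  rfl

end Monomials

section Sigma

lemma sigma_mono_of_wlen_lt {k : ℕ} {w : Word N} (h : wlen w < k + 2) :
    sigma b p k (mono w) = mono w := by
  rw [sigma, liftWord_mono, sigmaWord]
  exact dif_neg (not_le.mpr h)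

lemma sigma_mono_append_cons_cons (A C : List (Fin N)) (x y : Fin N) :
    sigma b p A.length (mono (FreeMonoid.ofList (A ++ x :: y :: C))) =
      mono (FreeMonoid.ofList A) * Sact b p x y * mono (FreeMonoid.ofList C) := by
  rw [sigma, liftWord_mono, sigmaWord, dif_pos (by simp)]
  have hdrop : (A ++ x :: y :: C).drop (A.length + 2) = C := by
    rw [show A ++ x :: y :: C = (A ++ [x, y]) ++ C by simp,
      show A.length + 2 = (A ++ [x, y]).length by simp, List.drop_left]
  simp [hdrop, List.getElem_append_right]

lemma Sact_mem_Tdeg (hp : GoodP p) (x y : Fin N) : Sact b p x y ∈ Tdeg N 2 := by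
  have hp₂ : ∀ i j : Fin N, j < i → p i j ∈ Tdeg N 2 := fun i j hji =>
    Submodule.span_le.mpr (by rintro _ ⟨k, l, -, -, rfl⟩; exact X_mul_X_mem_Tdeg k l) (hp i j hji)
  rw [Sact]
  split_ifs with hyx hxy
  · exact add_mem (Submodule.smul_mem _ _ (X_mul_X_mem_Tdeg y x)) (hp₂ x y hyx)
  · exact Submodule.smul_mem _ _ (sub_mem (X_mul_X_mem_Tdeg y x) (hp₂ y x hxy))
  · exact X_mul_X_mem_Tdeg x y

lemma sigma_mem_Tdeg (hp : GoodP p) (k : ℕ) {n : ℕ} {x : T N} (hx : x ∈ Tdeg N n) :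
    sigma b p k x ∈ Tdeg N n := by
  suffices Tdeg N n ≤ (Tdeg N n).comap (sigma b p k) from this hx
  refine Submodule.span_le.mpr ?_
  rintro _ ⟨w, rfl, rfl⟩
  rw [SetLike.mem_coe, Submodule.mem_comap]
  rcases lt_or_ge (wlen w) (k + 2) with h | h
  · rw [sigma_mono_of_wlen_lt h]
    exact mono_mem_Tdeg w
  · obtain ⟨A, x, y, C, rfl, rfl⟩ := exists_eq_ofList_append_cons_cons h
    rw [sigma_mono_append_cons_cons]
    convert mul_mem_Tdeg (mul_mem_Tdeg (mono_mem_Tdeg _) (Sact_mem_Tdeg hp x y))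
      (mono_mem_Tdeg _) using 2
    simp only [wlen, FreeMonoid.toList_ofList, List.length_append, List.length_cons]
    omega

lemma Phat_mem_Tdeg (hp : GoodP p) {n m : ℕ} (D : DecompChoice m) (σ : Equiv.Perm (Fin m))
    {x : T N} (hx : x ∈ Tdeg N n) : Phat b p D σ x ∈ Tdeg N n := by
  refine List.prod_induction (fun f : Module.End ℂ (T N) => ∀ x ∈ Tdeg N n, f x ∈ Tdeg N n)
    (fun f g hf hg x hx => hf _ (hg x hx)) (fun x hx => hx) ?_ x hx
  simp only [List.mem_map]
  rintro _ ⟨k, -, rfl⟩ x hx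
  exact sigma_mem_Tdeg hp k.1 hx

lemma POp_mem_Tdeg (hp : GoodP p) {n m : ℕ} (D : DecompChoice m) {x : T N}
    (hx : x ∈ Tdeg N n) : POp b p D x ∈ Tdeg N n := by
  rw [POp, LinearMap.smul_apply, LinearMap.sum_apply]
  exact Submodule.smul_mem _ _ (Submodule.sum_mem _ fun σ _ => Phat_mem_Tdeg hp D σ hx)

end Sigma

section Ideal

lemma mul_mem_IR {v : T N} (hv : v ∈ IR b p) (u : T N) : v * u ∈ IR b p := by
  induction hv using Submodule.span_induction with
  | mem z hz =>
      obtain ⟨i, j, a, c, hji, rfl⟩ := hz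
      exact Submodule.subset_span ⟨i, j, a, c * u, hji, by simp only [mul_assoc]⟩
  | zero => rw [zero_mul]; exact zero_mem _
  | add x y _ _ hx hy => rw [add_mul]; exact add_mem hx hy
  | smul c x _ hx => rw [smul_mul_assoc]; exact Submodule.smul_mem _ _ hx

lemma X_mul_X_sub_Sact_of_lt {i j : Fin N} (h : j < i) :
    X i * X j - Sact b p i j = relGen b p i j := by
  rw [Sact, if_pos h, relGen, sub_add_eq_sub_sub]

lemma X_mul_X_sub_Sact_of_gt (hb : GoodB b) {i j : Fin N} (h : i < j) :
    X i * X j - Sact b p i j = (-(b j i)⁻¹) • relGen b p j i := by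
  rw [Sact, if_neg h.asymm, if_pos h, relGen, neg_smul, smul_sub, smul_sub, smul_sub, smul_smul,
    inv_mul_cancel₀ (hb j i h), one_smul]
  abel

lemma mul_X_mul_X_sub_Sact_mul_mem_IR (hb : GoodB b) (a c : T N) (x y : Fin N) :
    a * (X x * X y - Sact b p x y) * c ∈ IR b p := by
  rcases lt_trichotomy x y with hxy | rfl | hyx
  · have h : a * ((-(b y x)⁻¹) • relGen b p y x) * c = ((-(b y x)⁻¹) • a) * relGen b p y x * c :=
      by simp only [mul_smul_comm, smul_mul_assoc]
    rw [X_mul_X_sub_Sact_of_gt hb hxy, h]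
    exact Submodule.subset_span ⟨y, x, (-(b y x)⁻¹) • a, c, hxy, rfl⟩
  · rw [Sact, if_neg (lt_irrefl x), if_neg (lt_irrefl x), sub_self, mul_zero, zero_mul]
    exact zero_mem _
  · rw [X_mul_X_sub_Sact_of_lt hyx]
    exact Submodule.subset_span ⟨x, y, a, c, hyx, rfl⟩

lemma mkQ_comp_sigma (hb : GoodB b) (k : ℕ) : (IR b p).mkQ ∘ₗ sigma b p k = (IR b p).mkQ := by
  refine linearMap_ext_mono fun w => ?_
  rw [LinearMap.comp_apply, Submodule.mkQ_apply, Submodule.mkQ_apply, Submodule.Quotient.eq']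
  rcases lt_or_ge (wlen w) (k + 2) with h | h
  · rw [sigma_mono_of_wlen_lt h, neg_add_cancel]
    exact zero_mem _
  · obtain ⟨A, x, y, C, rfl, rfl⟩ := exists_eq_ofList_append_cons_cons h
    rw [sigma_mono_append_cons_cons, mono_append_cons_cons, neg_add_eq_sub, ← sub_mul, ← mul_sub]
    exact mul_X_mul_X_sub_Sact_mul_mem_IR hb _ _ x y

lemma mkQ_comp_Phat (hb : GoodB b) {n : ℕ} (D : DecompChoice n) (σ : Equiv.Perm (Fin n)) :
    (IR b p).mkQ ∘ₗ Phat b p D σ = (IR b p).mkQ := by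
  refine List.prod_induction (fun f : Module.End ℂ (T N) => (IR b p).mkQ ∘ₗ f = (IR b p).mkQ)
    (fun f g hf hg => by rw [Module.End.mul_eq_comp, ← LinearMap.comp_assoc, hf, hg])
    (LinearMap.comp_id _) ?_
  simp only [List.mem_map]
  rintro _ ⟨k, -, rfl⟩
  exact mkQ_comp_sigma hb k.1

lemma mkQ_comp_POp (hb : GoodB b) {n : ℕ} (D : DecompChoice n) :
    (IR b p).mkQ ∘ₗ POp b p D = (IR b p).mkQ := by
  have hfac : (n.factorial : ℂ) ≠ 0 := by exact_mod_cast n.factorial_ne_zero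
  refine LinearMap.ext fun z => ?_
  have hPhat (σ : Equiv.Perm (Fin n)) : (IR b p).mkQ (Phat b p D σ z) = (IR b p).mkQ z :=
    LinearMap.congr_fun (mkQ_comp_Phat hb D σ) z
  simp only [LinearMap.comp_apply, POp, LinearMap.smul_apply, LinearMap.sum_apply, map_smul,
    map_sum, hPhat, Finset.sum_const, Finset.card_univ, Fintype.card_perm,
    Fintype.card_fin, ← Nat.cast_smul_eq_nsmul ℂ, smul_smul, inv_mul_cancel₀ hfac, one_smul]

lemma mkQ_comp_POp_pow (hb : GoodB b) {n : ℕ} (D : DecompChoice n) (M : ℕ) :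
    (IR b p).mkQ ∘ₗ (POp b p D ^ M) = (IR b p).mkQ := by
  induction M with
  | zero => exact LinearMap.comp_id _
  | succ M ih => rw [pow_succ, Module.End.mul_eq_comp, ← LinearMap.comp_assoc, ih, mkQ_comp_POp hb]

end Ideal

section Decompositions

lemma exists_list_swapAdj {n : ℕ} (σ : Equiv.Perm (Fin n)) :
    ∃ L : List {k : ℕ // k + 2 ≤ n}, (L.map (swapAdj n)).prod = σ := by
  obtain _ | m := n
  · exact ⟨[], Subsingleton.elim _ _⟩
  have hσ : σ ∈ Submonoid.closure (Set.range fun i : Fin m => Equiv.swap i.castSucc i.succ) := by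
    rw [Equiv.Perm.mclosure_swap_castSucc_succ]
    trivial
  induction hσ using Submonoid.closure_induction with
  | mem _ h =>
      obtain ⟨i, rfl⟩ := h
      exact ⟨[⟨i, by omega⟩], by simp only [List.map_cons, List.map_nil, List.prod_cons,
        List.prod_nil, mul_one]; rfl⟩
  | one => exact ⟨[], rfl⟩
  | mul _ _ _ _ h₁ h₂ =>
      obtain ⟨L₁, rfl⟩ := h₁
      obtain ⟨L₂, rfl⟩ := h₂
      exact ⟨L₁ ++ L₂, by rw [List.map_append, List.prod_append]⟩

lemma exists_validDecomp (n : ℕ) : ∃ D : DecompChoice n, ValidDecomp D :=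
  ⟨_, fun σ => (exists_list_swapAdj σ).choose_spec⟩

end Decompositions

section Pqsym

variable {Q : T N →ₗ[ℂ] T N}

lemma IsPqsym.apply_POp (hp : GoodP p) (hQ : IsPqsym b p Q) {n : ℕ} {D : DecompChoice n}
    (hD : ValidDecomp D) {x : T N} (hx : x ∈ Tdeg N n) : Q (POp b p D x) = Q x := by
  obtain ⟨M₀, h₀⟩ := hQ n D hD x hx
  obtain ⟨M₁, h₁⟩ := hQ n D hD (POp b p D x) (POp_mem_Tdeg hp D hx)
  rw [← h₁ (max M₀ M₁) (le_max_right _ _), ← Module.End.mul_apply, ← pow_succ,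
    h₀ _ ((le_max_left _ _).trans (Nat.le_succ _))]

/-- Appending `s_k` to every chosen decomposition turns `P` into `P ∘ σ_k`, so `Q ∘ σ_k = Q`
follows from `Q ∘ P = Q` for two different choices of decompositions. -/
lemma IsPqsym.comp_sigma (hp : GoodP p) (hQ : IsPqsym b p Q) (k : ℕ) :
    Q ∘ₗ sigma b p k = Q := by
  refine linearMap_ext_mono fun w => ?_
  rw [LinearMap.comp_apply]
  rcases lt_or_ge (wlen w) (k + 2) with h | h
  · rw [sigma_mono_of_wlen_lt h]
  set n := wlen w
  obtain ⟨D, hD⟩ := exists_validDecomp n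
  set τ := swapAdj n ⟨k, h⟩
  let D' : DecompChoice n := fun σ => D (σ * τ⁻¹) ++ [⟨k, h⟩]
  have hD' : ValidDecomp D' := fun σ => by
    simp only [D', List.map_append, List.prod_append, hD (σ * τ⁻¹), List.map_cons, List.map_nil,
      List.prod_cons, List.prod_nil, mul_one]
    exact inv_mul_cancel_right σ τ
  have hPOp : POp b p D' = POp b p D * sigma b p k := by
    have hPhat (σ : Equiv.Perm (Fin n)) : Phat b p D' σ = Phat b p D (σ * τ⁻¹) * sigma b p k := by
      simp only [Phat, D', List.map_append, List.prod_append, List.map_cons, List.map_nil,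
        List.prod_cons, List.prod_nil, mul_one]
    rw [POp, POp, smul_mul_assoc, Finset.sum_mul]
    simp only [hPhat]
    exact congrArg _ (Equiv.sum_comp (Equiv.mulRight τ⁻¹) fun σ => Phat b p D σ * sigma b p k)
  have hw := hQ.apply_POp hp hD' (mono_mem_Tdeg w)
  rwa [hPOp, Module.End.mul_apply,
    hQ.apply_POp hp hD (sigma_mem_Tdeg hp k (mono_mem_Tdeg w))] at hw

lemma IsPqsym.apply_mul_relGen_mul (hp : GoodP p) (hQ : IsPqsym b p Q) {i j : Fin N} (hji : j < i)
    (a c : T N) : Q (a * relGen b p i j * c) = 0 := by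
  let B : T N →ₗ[ℂ] T N →ₗ[ℂ] T N :=
    ((LinearMap.mul ℂ (T N)).comp (LinearMap.mulRight ℂ (relGen b p i j))).compr₂ Q
  suffices B = 0 from LinearMap.congr_fun₂ this a c
  refine linearMap_ext_mono fun u => linearMap_ext_mono fun v => ?_
  obtain ⟨A, rfl⟩ : ∃ A, FreeMonoid.ofList A = u := ⟨_, FreeMonoid.ofList_toList u⟩
  obtain ⟨C, rfl⟩ : ∃ C, FreeMonoid.ofList C = v := ⟨_, FreeMonoid.ofList_toList v⟩
  have hsub := congrArg Q (sigma_mono_append_cons_cons (b := b) (p := p) A C i j)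
  rw [← LinearMap.comp_apply, hQ.comp_sigma hp] at hsub
  simp only [B, LinearMap.compr₂_apply, LinearMap.comp_apply, LinearMap.mulRight_apply,
    LinearMap.mul_apply', LinearMap.zero_apply]
  rw [← X_mul_X_sub_Sact_of_lt hji, mul_sub, sub_mul, map_sub, ← mono_append_cons_cons, hsub,
    sub_self]

lemma IsPqsym.IR_le_ker (hp : GoodP p) (hQ : IsPqsym b p Q) : IR b p ≤ LinearMap.ker Q :=
  Submodule.span_le.mpr fun _ ⟨_, _, a, c, hji, hx⟩ => hx ▸ hQ.apply_mul_relGen_mul hp hji a c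

lemma IsPqsym.mkQ_comp (hb : GoodB b) (hQ : IsPqsym b p Q) : (IR b p).mkQ ∘ₗ Q = (IR b p).mkQ := by
  refine linearMap_ext_mono fun w => ?_
  obtain ⟨D, hD⟩ := exists_validDecomp (wlen w)
  obtain ⟨M, hM⟩ := hQ (wlen w) D hD (mono w) (mono_mem_Tdeg w)
  rw [LinearMap.comp_apply, ← hM M le_rfl, ← LinearMap.comp_apply, mkQ_comp_POp_pow hb]

lemma IsPqsym.ker_eq_IR (hb : GoodB b) (hp : GoodP p) (hQ : IsPqsym b p Q) :
    LinearMap.ker Q = IR b p := by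
  refine le_antisymm (fun x hx => ?_) (hQ.IR_le_ker hp)
  have hx' := LinearMap.congr_fun (hQ.mkQ_comp hb) x
  rw [LinearMap.comp_apply, LinearMap.mem_ker.mp hx, map_zero, eq_comm] at hx'
  exact (Submodule.Quotient.mk_eq_zero _).mp hx'

end Pqsym

theorem statement16_general {N : ℕ} (b : Fin N → Fin N → ℂ) (p : Fin N → Fin N → T N)
    (hb : GoodB b) (hp : GoodP p) :
    ∀ Q : T N →ₗ[ℂ] T N, IsPqsym b p Q →
      ∀ u₁ : T N, Q u₁ = 0 → ∀ u : T N, Q (u₁ * u) = 0 := by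
  intro Q hQ u₁ hu₁ u
  rw [← LinearMap.mem_ker, hQ.ker_eq_IR hb hp] at hu₁ ⊢
  exact mul_mem_IR hu₁ u

/-- under (EA), if `𝒫_qsym(u₁) = 0` then `𝒫_qsym(u₁ ⊗ u) = 0` for all
`u ∈ T`. -/
theorem statement16 {N : ℕ} (b : Fin N → Fin N → ℂ) (p : Fin N → Fin N → T N)
    (hb : GoodB b) (hp : GoodP p) (hEA : EA b p) :
    ∀ Q : T N →ₗ[ℂ] T N, IsPqsym b p Q →
      ∀ u₁ : T N, Q u₁ = 0 → ∀ u : T N, Q (u₁ * u) = 0 :=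
  statement16_general b p hb hp

end QDiff
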